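/- arXiv:1310.7014 — 3 statements merged into one kernel-verified Lean document; each statement's English description precedes it below -/
import Mathlib

section
/- Let K > 1 and μ > 0. Define b = μ² - 2Kμ(1 + √(1 - 1/K²)) and c = 4K²μ²√(1 - 1/K²). Then the quadratic X² + bX + c = 0 has two positive real roots X = ω±² if and only if μ < 2(K + √(K² - 1)) - 4√(K√(K² - 1)). -/
/-!
Write `s = √(1 - 1/K²)`, so that `√(K² - 1) = K s`, and put `A = 2K(1 + s)`, `t = K √s`. Then
`b = μ² - Aμ` and `c = 4μ²t² > 0`. Since `c > 0`, the two real roots are positive exactly when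
`b < 0` and the discriminant is positive, i.e. when `μ < A` and `μ²((A - μ)² - 16t²) > 0`;
together these say `A - μ > 4t`, which is the stated bound.
-/

open Real

/-- With `c > 0`, `√(b² - 4c) < |b|`, so the smaller root is positive iff `b < 0`. -/
theorem quadratic_roots_pos_iff {b c : ℝ} (hc : 0 < c) :
    (0 < b ^ 2 - 4 * c ∧ 0 < (-b + √(b ^ 2 - 4 * c)) / 2 ∧ 0 < (-b - √(b ^ 2 - 4 * c)) / 2) ↔
      b < 0 ∧ 4 * c < b ^ 2 := by
  constructor
  · rintro ⟨hD, -, hsmall⟩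
    exact ⟨by linarith [sqrt_nonneg (b ^ 2 - 4 * c)], by linarith⟩
  · rintro ⟨hb, hD⟩
    have hsqrt : √(b ^ 2 - 4 * c) < -b := by
      rw [sqrt_lt' (by linarith)]
      nlinarith
    exact ⟨by linarith, by linarith [sqrt_nonneg (b ^ 2 - 4 * c)], by linarith⟩

theorem neg_and_discrim_pos_iff {A μ t : ℝ} (hμ : 0 < μ) (ht : 0 ≤ t) :
    (μ ^ 2 - A * μ < 0 ∧ 4 * (4 * μ ^ 2 * t ^ 2) < (μ ^ 2 - A * μ) ^ 2) ↔ μ < A - 4 * t := by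
  have hdiscrim : (μ ^ 2 - A * μ) ^ 2 - 4 * (4 * μ ^ 2 * t ^ 2) =
      μ ^ 2 * ((A - μ - 4 * t) * (A - μ + 4 * t)) := by ring
  constructor
  · rintro ⟨hb, hD⟩
    have hμA : μ < A := by nlinarith
    have hprod : 0 < (A - μ - 4 * t) * (A - μ + 4 * t) := by
      have := pow_pos hμ 2
      nlinarith
    nlinarith
  · intro h
    have hprod : 0 < (A - μ - 4 * t) * (A - μ + 4 * t) := mul_pos (by linarith) (by linarith)
    exact ⟨by nlinarith, by nlinarith [mul_pos (pow_pos hμ 2) hprod]⟩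

theorem sqrt_sq_mul_eq {K x : ℝ} (hK : 0 ≤ K) : √(K ^ 2 * x) = K * √x := by
  rw [sqrt_mul (sq_nonneg K), sqrt_sq hK]

theorem stmt9 (K μ : ℝ) (hK : 1 < K) (hμ : 0 < μ) :
    (0 < (μ ^ 2 - 2 * K * μ * (1 + Real.sqrt (1 - 1 / K ^ 2))) ^ 2 -
          4 * (4 * K ^ 2 * μ ^ 2 * Real.sqrt (1 - 1 / K ^ 2)) ∧
      0 < (-(μ ^ 2 - 2 * K * μ * (1 + Real.sqrt (1 - 1 / K ^ 2))) +
            Real.sqrt ((μ ^ 2 - 2 * K * μ * (1 + Real.sqrt (1 - 1 / K ^ 2))) ^ 2 -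
              4 * (4 * K ^ 2 * μ ^ 2 * Real.sqrt (1 - 1 / K ^ 2)))) / 2 ∧
      0 < (-(μ ^ 2 - 2 * K * μ * (1 + Real.sqrt (1 - 1 / K ^ 2))) -
            Real.sqrt ((μ ^ 2 - 2 * K * μ * (1 + Real.sqrt (1 - 1 / K ^ 2))) ^ 2 -
              4 * (4 * K ^ 2 * μ ^ 2 * Real.sqrt (1 - 1 / K ^ 2)))) / 2) ↔
    μ < 2 * (K + Real.sqrt (K ^ 2 - 1)) - 4 * Real.sqrt (K * Real.sqrt (K ^ 2 - 1)) := by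
  have hK0 : 0 < K := one_pos.trans hK
  set s := √(1 - 1 / K ^ 2)
  have hs : 0 < s := sqrt_pos.mpr (by
    have : 1 / K ^ 2 < 1 := by rw [div_lt_one (by positivity)]; nlinarith
    linarith)
  have hsqrt_sub : √(K ^ 2 - 1) = K * s := by
    rw [← sqrt_sq_mul_eq hK0.le]; congr 1; field_simp
  have hT : √(K * (K * s)) = K * √s := by
    rw [← mul_assoc, ← sq, sqrt_sq_mul_eq hK0.le]
  have hb : μ ^ 2 - 2 * K * μ * (1 + s) = μ ^ 2 - 2 * K * (1 + s) * μ := by ring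
  have hc : 4 * K ^ 2 * μ ^ 2 * s = 4 * μ ^ 2 * (K * √s) ^ 2 := by
    rw [mul_pow, sq_sqrt hs.le]; ring
  rw [hb, hc, quadratic_roots_pos_iff (by positivity),
    neg_and_discrim_pos_iff hμ (by positivity), hsqrt_sub, hT]
  ring_nf
end

section
/- Let μ > 0, K > 0, N ≥ 2, and A ∈ ℝ with A = K cos(Ω̂τ). If the quartic ω⁴ + (μ² - 2μA)ω² + (N(N-2)/(N-1)²)μ²A² = 0 has a positive real root ω, then A ≥ 0 and μ ≤ 2A(1 - √(N(N-2))/(N-1)). -/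
/-! Put `x = ω²`: the quartic becomes `x² + b x + c = 0` with `b = μ² - 2μA` and
`c = (N(N-2)/(N-1)²) μ²A² ≥ 0`. A positive root forces `b < 0`, i.e. `μ < 2A`, and a real root
forces `4c ≤ b²`; dividing the latter by `μ²` and taking square roots gives
`2A √(N(N-2))/(N-1) ≤ 2A - μ`. -/

section Quadratic

variable {R : Type*} [CommRing R] [LinearOrder R] [IsStrictOrderedRing R] {b c x : R}

theorem neg_of_sq_add_mul_add_eq_zero (hx : 0 < x) (hc : 0 ≤ c) (h : x ^ 2 + b * x + c = 0) :
    b < 0 := by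
  nlinarith

theorem four_mul_le_sq_of_sq_add_mul_add_eq_zero (h : x ^ 2 + b * x + c = 0) : 4 * c ≤ b ^ 2 := by
  have hdisc : b ^ 2 - 4 * c = (2 * x + b) ^ 2 := by linear_combination (-4) * h
  nlinarith [sq_nonneg (2 * x + b)]

end Quadratic

theorem stmt17_general (μ : ℝ) (N : ℕ) (A : ℝ) (hμ : 0 < μ)
    (hN : 2 ≤ N) (ω : ℝ) (hω : 0 < ω)
    (heq : ω ^ 4 + (μ ^ 2 - 2 * μ * A) * ω ^ 2 +
      ((N : ℝ) * ((N : ℝ) - 2) / ((N : ℝ) - 1) ^ 2) * μ ^ 2 * A ^ 2 = 0) :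
    0 ≤ A ∧
      μ ≤ 2 * A * (1 - Real.sqrt ((N : ℝ) * ((N : ℝ) - 2)) / ((N : ℝ) - 1)) := by
  have hN' : (2 : ℝ) ≤ N := by exact_mod_cast hN
  set c : ℝ := (N : ℝ) * ((N : ℝ) - 2) / ((N : ℝ) - 1) ^ 2
  have hc : 0 ≤ c := div_nonneg (mul_nonneg (by linarith) (by linarith)) (sq_nonneg _)
  have hroot : (ω ^ 2) ^ 2 + (μ ^ 2 - 2 * μ * A) * ω ^ 2 + c * μ ^ 2 * A ^ 2 = 0 := by
    linear_combination heq
  have hμA : μ < 2 * A := by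
    have hb := neg_of_sq_add_mul_add_eq_zero (by positivity) (by positivity) hroot
    nlinarith
  have hdisc : (2 * A * √c) ^ 2 ≤ (2 * A - μ) ^ 2 := by
    have h := four_mul_le_sq_of_sq_add_mul_add_eq_zero hroot
    refine le_of_mul_le_mul_left ?_ (pow_pos hμ 2)
    linear_combination h + 4 * μ ^ 2 * A ^ 2 * Real.sq_sqrt hc
  have hsqrt : 2 * A * √c ≤ 2 * A - μ :=
    (le_abs_self _).trans (abs_le_of_sq_le_sq hdisc (by linarith))
  have hc_sqrt : √c = √((N : ℝ) * ((N : ℝ) - 2)) / ((N : ℝ) - 1) := by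
    rw [Real.sqrt_div' _ (sq_nonneg _), Real.sqrt_sq (by linarith)]
  refine ⟨by linarith, ?_⟩
  rw [← hc_sqrt]
  linarith

theorem stmt17 (μ K : ℝ) (N : ℕ) (A : ℝ) (hμ : 0 < μ) (hK : 0 < K)
    (hN : 2 ≤ N) (ω : ℝ) (hω : 0 < ω)
    (heq : ω ^ 4 + (μ ^ 2 - 2 * μ * A) * ω ^ 2 +
      ((N : ℝ) * ((N : ℝ) - 2) / ((N : ℝ) - 1) ^ 2) * μ ^ 2 * A ^ 2 = 0) :
    0 ≤ A ∧
      μ ≤ 2 * A * (1 - Real.sqrt ((N : ℝ) * ((N : ℝ) - 2)) / ((N : ℝ) - 1)) :=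
  stmt17_general μ N A hμ hN ω hω heq
end

section
/- Let μ, K, ω_M, τ > 0 and C ∈ ℝ. Suppose θ: ℝ → ℝ satisfies the ODE θ''(t) + μθ'(t) + Kμ sin(C + ω_M τ) = 0 and additionally θ(t) - θ(t - τ) = C for all t. Then θ(t) = -K sin(C + ω_M τ)·t + C₁ for some constant C₁, and C satisfies C = -Kτ sin(C + ω_M τ). -/
/-!
Set `v = θ'`. Differentiating the delay relation shows that `v` is `τ`-periodic, while the ODE
says `v' = -μ (v + K sin (C + ω_M τ))`, so `v` relaxes exponentially to `-K sin (C + ω_M τ)`.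
A periodic function that relaxes exponentially to a constant is that constant, hence `θ` is affine
with slope `-K sin (C + ω_M τ)`, and the delay relation at `t = τ` yields the equation for `C`.
-/

open Real

lemma periodic_deriv_of_sub_shift_eq_const {θ : ℝ → ℝ} {τ C : ℝ}
    (hdelay : ∀ t, θ t - θ (t - τ) = C) : Function.Periodic (deriv θ) τ := by
  intro t
  have hshift : (fun x => θ (x + τ)) = fun x => θ x + C := by
    funext x
    have := hdelay (x + τ)
    rw [add_sub_cancel_right] at this
    linarith
  rw [← deriv_comp_add_const, hshift, deriv_add_const]

lemma exp_mul_sub_eq_of_deriv_eq {v : ℝ → ℝ} {μ c : ℝ} (hv : Differentiable ℝ v)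
    (hode : ∀ t, deriv v t = -μ * (v t - c)) (t : ℝ) :
    exp (μ * t) * (v t - c) = v 0 - c := by
  set f : ℝ → ℝ := fun t => exp (μ * t) * (v t - c)
  have hf : ∀ t, HasDerivAt f 0 t := by
    intro t
    have hexp : HasDerivAt (fun t => exp (μ * t)) (exp (μ * t) * μ) t := by
      simpa using ((hasDerivAt_id t).const_mul μ).exp
    refine (hexp.mul ((hv t).hasDerivAt.sub_const c)).congr_deriv ?_
    rw [hode]
    ring
  have := is_const_of_deriv_eq_zero (fun x => (hf x).differentiableAt) (fun x => (hf x).deriv) t 0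
  simpa [f] using this

lemma eq_const_of_periodic_of_deriv_eq {v : ℝ → ℝ} {μ τ c : ℝ} (hμ : μ ≠ 0) (hτ : τ ≠ 0)
    (hv : Differentiable ℝ v) (hode : ∀ t, deriv v t = -μ * (v t - c))
    (hper : Function.Periodic v τ) (t : ℝ) : v t = c := by
  have hv0 : v 0 = c := by
    have hτ' := exp_mul_sub_eq_of_deriv_eq hv hode τ
    rw [show v τ = v 0 by simpa using hper 0] at hτ'
    have hexp : exp (μ * τ) ≠ 1 := by
      rw [Ne, exp_eq_one_iff]
      exact mul_ne_zero hμ hτ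
    have : (exp (μ * τ) - 1) * (v 0 - c) = 0 := by linarith
    rcases mul_eq_zero.mp this with h | h
    · exact absurd (sub_eq_zero.mp h) hexp
    · linarith
  have := exp_mul_sub_eq_of_deriv_eq hv hode t
  rw [hv0, sub_self, mul_eq_zero] at this
  rcases this with h | h
  · exact absurd h (exp_ne_zero _)
  · linarith

lemma eq_mul_add_of_deriv_eq_const {θ : ℝ → ℝ} {a : ℝ} (hθ : Differentiable ℝ θ)
    (hderiv : ∀ t, deriv θ t = a) (t : ℝ) : θ t = a * t + θ 0 := by
  have hg : ∀ x, HasDerivAt (fun x => θ x - a * x) 0 x := by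
    intro x
    have := (hθ x).hasDerivAt.sub ((hasDerivAt_id' x).const_mul a)
    rwa [hderiv x, mul_one, sub_self] at this
  have := is_const_of_deriv_eq_zero (fun x => (hg x).differentiableAt) (fun x => (hg x).deriv) t 0
  simp only [mul_zero, sub_zero] at this
  linarith

theorem stmt19_general (μ K ωM τ C : ℝ) (hμ : 0 < μ)
    (hτ : 0 < τ) (θ : ℝ → ℝ) (hθ : ContDiff ℝ 2 θ)
    (hode : ∀ t, deriv (deriv θ) t + μ * deriv θ t +
      K * μ * Real.sin (C + ωM * τ) = 0)
    (hdelay : ∀ t, θ t - θ (t - τ) = C) :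
    (∃ C₁ : ℝ, ∀ t, θ t = -K * Real.sin (C + ωM * τ) * t + C₁) ∧
      C = -K * τ * Real.sin (C + ωM * τ) := by
  set s := Real.sin (C + ωM * τ)
  have hθ' : ContDiff ℝ 1 (deriv θ) :=
    (contDiff_succ_iff_deriv.mp (show ContDiff ℝ (1 + 1) θ from hθ)).2.2
  have hslope : ∀ t, deriv θ t = -K * s :=
    eq_const_of_periodic_of_deriv_eq hμ.ne' hτ.ne' (hθ'.differentiable one_ne_zero)
      (fun t => by linear_combination hode t) (periodic_deriv_of_sub_shift_eq_const hdelay)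
  have haffine := eq_mul_add_of_deriv_eq_const (hθ.differentiable two_ne_zero) hslope
  refine ⟨⟨θ 0, haffine⟩, ?_⟩
  have := hdelay τ
  rw [haffine τ, haffine (τ - τ)] at this
  linear_combination -this

theorem stmt19 (μ K ωM τ C : ℝ) (hμ : 0 < μ) (hK : 0 < K) (hω : 0 < ωM)
    (hτ : 0 < τ) (θ : ℝ → ℝ) (hθ : ContDiff ℝ 2 θ)
    (hode : ∀ t, deriv (deriv θ) t + μ * deriv θ t +
      K * μ * Real.sin (C + ωM * τ) = 0)
    (hdelay : ∀ t, θ t - θ (t - τ) = C) :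
    (∃ C₁ : ℝ, ∀ t, θ t = -K * Real.sin (C + ωM * τ) * t + C₁) ∧
      C = -K * τ * Real.sin (C + ωM * τ) :=
  stmt19_general μ K ωM τ C hμ hτ θ hθ hode hdelay
end
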